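/- Let f = (f₁,f₂,f₃) : 𝔻 → 𝔼 be holomorphic with f(0) = (0,0,0), satisfying f₃(λ) - f₂(λ) = λ(f₁(λ) - 1) for all λ ∈ 𝔻 (i.e. Ψ₁ ∘ f = id), and suppose there exist a ∈ ℂ, C ∈ ℝ such that (f₁(λ)f₂(λ) - f₃(λ))/(f₁(λ) - 1)² = conj(a)λ² + Cλ + a for all λ ∈ 𝔻. Then a = 0, C ∈ [0,1], and there exists a holomorphic φ : 𝔻 → closure(𝔻) with φ(0) = -C such that f₁(λ) = (φ(λ)+C)/(1+C), f₂(λ) = λ(1 + Cφ(λ))/(1+C), f₃(λ) = λφ(λ). -/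

import Mathlib

/-!
Eliminating `f₃` through `Ψ₁ ∘ f = id`, the hypothesis on `(f₁f₂ - f₃)/(f₁ - 1)²` becomes
`(f₁ - 1)(f₂ - λ(1 + C(f₁ - 1))) = 0`; as `f₁` omits the value `1`, this forces
`f₂ = λ(Cf₁ + 1 - C)` and `f₃ = λ((1 + C)f₁ - C)`. The Schwarz lemma applied to `f₂` and `f₃`
bounds the holomorphic quotients `Cf₁ + 1 - C` and `φ = (1 + C)f₁ - C` by `1`; at `λ = 0` they take
the values `1 - C` and `-C`, whence `0 ≤ C ≤ 1`.
-/

open Complex Metric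

def tetrablock : Set (ℂ × ℂ × ℂ) :=
  {z | ‖z.1 - (starRingEnd ℂ) z.2.1 * z.2.2‖ +
       ‖z.2.1 - (starRingEnd ℂ) z.1 * z.2.2‖ +
       ‖z.2.2‖ ^ 2 < 1}

open Set ComplexConjugate

theorem norm_lt_one_of_mem_tetrablock {z : ℂ × ℂ × ℂ} (hz : z ∈ tetrablock) :
    ‖z.1‖ < 1 ∧ ‖z.2.1‖ < 1 ∧ ‖z.2.2‖ < 1 := by
  obtain ⟨z₁, z₂, z₃⟩ := z
  simp only [tetrablock, mem_ofPred_eq] at hz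
  have hA := norm_nonneg (z₁ - conj z₂ * z₃)
  have hB := norm_nonneg (z₂ - conj z₁ * z₃)
  have h₃ : ‖z₃‖ < 1 := by nlinarith [norm_nonneg z₃]
  have h₁ : ‖z₁‖ ≤ ‖z₁ - conj z₂ * z₃‖ + ‖z₂‖ * ‖z₃‖ := by
    simpa [norm_mul] using norm_le_norm_sub_add z₁ (conj z₂ * z₃)
  have h₂ : ‖z₂‖ ≤ ‖z₂ - conj z₁ * z₃‖ + ‖z₁‖ * ‖z₃‖ := by
    simpa [norm_mul] using norm_le_norm_sub_add z₂ (conj z₁ * z₃)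
  refine ⟨?_, ?_, h₃⟩ <;> nlinarith [norm_nonneg z₁, norm_nonneg z₂, norm_nonneg z₃]

theorem norm_le_div_of_mapsTo_ball_of_smul {E : Type*} [NormedAddCommGroup E] [NormedSpace ℂ E]
    {h : ℂ → E} {c z : ℂ} {R₁ R₂ : ℝ} (hd : DifferentiableOn ℂ h (ball c R₁))
    (h_maps : MapsTo (fun w => (w - c) • h w) (ball c R₁) (closedBall 0 R₂))
    (hz : z ∈ ball c R₁) : ‖h z‖ ≤ R₂ / R₁ := by
  set F : ℂ → E := fun w => (w - c) • h w
  have hc : c ∈ ball c R₁ := mem_ball_self (pos_of_mem_ball hz)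
  have hF : DifferentiableOn ℂ F (ball c R₁) := ((differentiableOn_id.sub_const c).smul hd)
  have hFc : F c = 0 := by simp [F]
  have hdslope : dslope F c z = h z := by
    rcases eq_or_ne z c with rfl | hne
    · have hderiv : HasDerivAt F (h z) z :=
        (((hasDerivAt_id z).sub_const z).smul
          (hd.differentiableAt (isOpen_ball.mem_nhds hc)).hasDerivAt).congr_deriv (by simp)
      rw [dslope_same, hderiv.deriv]
    · rw [dslope_of_ne _ hne, slope_def_module, hFc, sub_zero, inv_smul_smul₀ (sub_ne_zero.2 hne)]
  rw [← hdslope]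
  exact Complex.norm_dslope_le_div_of_mapsTo_ball hF (hFc ▸ h_maps) hz

theorem eq_mul_of_sub_eq_mul_of_div_sq_eq {K : Type*} [Field K] {z₁ z₂ z₃ l c : K}
    (h₁ : z₁ ≠ 1) (hΨ : z₃ - z₂ = l * (z₁ - 1)) (hq : (z₁ * z₂ - z₃) / (z₁ - 1) ^ 2 = c * l) :
    z₂ = l * (c * z₁ + (1 - c)) ∧ z₃ = l * ((1 + c) * z₁ - c) := by
  have hne : z₁ - 1 ≠ 0 := sub_ne_zero.2 h₁
  rw [div_eq_iff (pow_ne_zero 2 hne)] at hq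
  have hfactor : (z₁ - 1) * (z₂ - l * (c * z₁ + (1 - c))) = 0 := by
    linear_combination hq + hΨ
  have h₂ : z₂ = l * (c * z₁ + (1 - c)) :=
    sub_eq_zero.1 ((mul_eq_zero.1 hfactor).resolve_left hne)
  exact ⟨h₂, by linear_combination hΨ + h₂⟩

theorem stmt13_general (f₁ f₂ f₃ : ℂ → ℂ)
    (hf₁ : DifferentiableOn ℂ f₁ (ball (0 : ℂ) 1))
    (hfm : ∀ l ∈ ball (0 : ℂ) 1, (f₁ l, f₂ l, f₃ l) ∈ tetrablock)
    (hf0 : f₁ 0 = 0 ∧ f₂ 0 = 0 ∧ f₃ 0 = 0)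
    (hid : ∀ l ∈ ball (0 : ℂ) 1, f₃ l - f₂ l = l * (f₁ l - 1))
    (a : ℂ) (C : ℝ)
    (heq : ∀ l ∈ ball (0 : ℂ) 1,
      (f₁ l * f₂ l - f₃ l) / (f₁ l - 1) ^ 2
        = (starRingEnd ℂ) a * l ^ 2 + C * l + a) :
    a = 0 ∧ C ∈ Set.Icc (0 : ℝ) 1 ∧
      ∃ φ : ℂ → ℂ, DifferentiableOn ℂ φ (ball (0 : ℂ) 1) ∧
        (∀ l ∈ ball (0 : ℂ) 1, φ l ∈ closedBall (0 : ℂ) 1) ∧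
        φ 0 = -(C : ℂ) ∧
        ∀ l ∈ ball (0 : ℂ) 1,
          f₁ l = (φ l + C) / (1 + C) ∧
          f₂ l = l * (1 + C * φ l) / (1 + C) ∧
          f₃ l = l * φ l := by
  obtain ⟨h₁0, h₂0, h₃0⟩ := hf0
  have ha : a = 0 := by simpa [h₁0, h₂0, h₃0] using (heq 0 (mem_ball_self one_pos)).symm
  subst ha
  have hbound := fun l hl => norm_lt_one_of_mem_tetrablock (hfm l hl)
  set φ : ℂ → ℂ := fun l => (1 + C) * f₁ l - C
  set g : ℂ → ℂ := fun l => C * f₁ l + (1 - C)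
  have hfactor : ∀ l ∈ ball (0 : ℂ) 1, f₂ l = l * g l ∧ f₃ l = l * φ l := fun l hl =>
    eq_mul_of_sub_eq_mul_of_div_sq_eq (fun h => by simpa [h] using (hbound l hl).1) (hid l hl)
      (by simpa using heq l hl)
  have hφ_le : ∀ l ∈ ball (0 : ℂ) 1, ‖φ l‖ ≤ 1 := fun l hl => by
    simpa using norm_le_div_of_mapsTo_ball_of_smul (R₂ := 1) (by fun_prop)
      (fun w hw => by simpa [← (hfactor w hw).2] using (hbound w hw).2.2.le) hl
  have hg_le : ∀ l ∈ ball (0 : ℂ) 1, ‖g l‖ ≤ 1 := fun l hl => by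
    simpa using norm_le_div_of_mapsTo_ball_of_smul (R₂ := 1) (by fun_prop)
      (fun w hw => by simpa [← (hfactor w hw).1] using (hbound w hw).2.1.le) hl
  have hC : |C| ≤ 1 := by simpa [φ, h₁0] using hφ_le 0 (mem_ball_self one_pos)
  have h1C : |1 - C| ≤ 1 := by
    simpa [g, h₁0, ← ofReal_one, ← ofReal_sub, norm_real] using hg_le 0 (mem_ball_self one_pos)
  have h1C_ne : (1 : ℂ) + C ≠ 0 := by
    exact_mod_cast (by linarith [abs_le.1 h1C] : (1 + C : ℝ) ≠ 0)
  refine ⟨rfl, ⟨by linarith [abs_le.1 h1C], (abs_le.1 hC).2⟩, φ, by fun_prop,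
    fun l hl => mem_closedBall_zero_iff.2 (hφ_le l hl), by simp [φ, h₁0], fun l hl => ?_⟩
  obtain ⟨h₂, h₃⟩ := hfactor l hl
  refine ⟨?_, ?_, h₃⟩ <;> field_simp <;> simp only [h₂, φ, g] <;> ring

theorem stmt13 (f₁ f₂ f₃ : ℂ → ℂ)
    (hf₁ : DifferentiableOn ℂ f₁ (ball (0 : ℂ) 1))
    (hf₂ : DifferentiableOn ℂ f₂ (ball (0 : ℂ) 1))
    (hf₃ : DifferentiableOn ℂ f₃ (ball (0 : ℂ) 1))
    (hfm : ∀ l ∈ ball (0 : ℂ) 1, (f₁ l, f₂ l, f₃ l) ∈ tetrablock)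
    (hf0 : f₁ 0 = 0 ∧ f₂ 0 = 0 ∧ f₃ 0 = 0)
    (hid : ∀ l ∈ ball (0 : ℂ) 1, f₃ l - f₂ l = l * (f₁ l - 1))
    (a : ℂ) (C : ℝ)
    (heq : ∀ l ∈ ball (0 : ℂ) 1,
      (f₁ l * f₂ l - f₃ l) / (f₁ l - 1) ^ 2
        = (starRingEnd ℂ) a * l ^ 2 + C * l + a) :
    a = 0 ∧ C ∈ Set.Icc (0 : ℝ) 1 ∧
      ∃ φ : ℂ → ℂ, DifferentiableOn ℂ φ (ball (0 : ℂ) 1) ∧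
        (∀ l ∈ ball (0 : ℂ) 1, φ l ∈ closedBall (0 : ℂ) 1) ∧
        φ 0 = -(C : ℂ) ∧
        ∀ l ∈ ball (0 : ℂ) 1,
          f₁ l = (φ l + C) / (1 + C) ∧
          f₂ l = l * (1 + C * φ l) / (1 + C) ∧
          f₃ l = l * φ l :=
  stmt13_general f₁ f₂ f₃ hf₁ hfm hf0 hid a C heq
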